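/- arXiv:2601.02722 — 2 statements merged into one kernel-verified Lean document; each statement's English description precedes it below -/
import Mathlib

section
/- Let λ₁ ≤ λ₂ ≤ ⋯ ≤ λ_N be real numbers and let ω₁, …, ω_N be nonnegative reals with ω_i ≤ Ω for all i and Σᵢ ω_i = S. Then for any integer m with 1 ≤ m ≤ N−1 and m·Ω ≤ S, we have Σᵢ ω_i λ_i ≥ (S − mΩ)·λ_{m+1} + Ω·Σ_{i=1}^{m} λ_i. -/
open Finset

theorem weighted_sum_lower_bound
    (N m : ℕ) (hm : 1 ≤ m) (hmN : m + 1 ≤ N)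
    (lam ω : ℕ → ℝ) (Ω S : ℝ)
    (hmono : ∀ i j, i ≤ j → j < N → lam i ≤ lam j)
    (hω0 : ∀ i < N, 0 ≤ ω i) (hωΩ : ∀ i < N, ω i ≤ Ω)
    (hS : ∑ i ∈ range N, ω i = S)
    (hmΩ : (m : ℝ) * Ω ≤ S) :
    (S - m * Ω) * lam m + Ω * ∑ i ∈ range m, lam i ≤ ∑ i ∈ range N, ω i * lam i := by
  have hmN' : m ≤ N := by omega
  have hmlt : m < N := by omega
  -- split sums at m
  have hsplitω : ∑ i ∈ range m, ω i + ∑ i ∈ Ico m N, ω i = S := by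
    rw [Finset.sum_range_add_sum_Ico _ hmN', hS]
  have hsplit : ∑ i ∈ range m, ω i * lam i + ∑ i ∈ Ico m N, ω i * lam i
      = ∑ i ∈ range N, ω i * lam i :=
    Finset.sum_range_add_sum_Ico _ hmN'
  have hA : ∑ i ∈ range m, (Ω * lam i - (Ω - ω i) * lam m)
      ≤ ∑ i ∈ range m, ω i * lam i := by
    apply Finset.sum_le_sum
    intro i hi
    have hi' : i < m := Finset.mem_range.mp hi
    have h1 : lam i ≤ lam m := hmono i m (by omega) hmlt
    have h2 : ω i ≤ Ω := hωΩ i (by omega)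
    nlinarith
  have hB : ∑ i ∈ Ico m N, ω i * lam m ≤ ∑ i ∈ Ico m N, ω i * lam i := by
    apply Finset.sum_le_sum
    intro i hi
    have hi' := Finset.mem_Ico.mp hi
    have h1 : lam m ≤ lam i := hmono m i hi'.1 hi'.2
    have h2 : 0 ≤ ω i := hω0 i hi'.2
    nlinarith
  have eA : ∑ i ∈ range m, (Ω * lam i - (Ω - ω i) * lam m)
      = Ω * ∑ i ∈ range m, lam i - (m * Ω - ∑ i ∈ range m, ω i) * lam m := by
    rw [Finset.sum_sub_distrib, ← Finset.mul_sum, ← Finset.sum_mul, Finset.sum_sub_distrib,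
      Finset.sum_const, Finset.card_range, nsmul_eq_mul]
  have eB : ∑ i ∈ Ico m N, ω i * lam m = (∑ i ∈ Ico m N, ω i) * lam m :=
    (Finset.sum_mul ..).symm
  rw [← hsplit]
  rw [eA] at hA
  rw [eB] at hB
  have hIco : ∑ i ∈ Ico m N, ω i = S - ∑ i ∈ range m, ω i := by linarith
  rw [hIco] at hB
  linarith
end

section
/- Fix n ≥ 3 and let λ₁ ≤ ⋯ ≤ λ_N be real numbers with N ≥ n. Suppose the sequence is n(n+2)/(2(n+1))-nonnegative, i.e., λ₁ + ⋯ + λ_{⌊k⌋} + (k−⌊k⌋)λ_{⌊k⌋+1} ≥ 0 for k = n(n+2)/(2(n+1)). Then every weighted sum Σᵢ ωᵢ λᵢ with nonnegative weights ωᵢ ≤ 2(n+1)/(n+2) and total weight Σᵢ ωᵢ = n is nonnegative. -/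
open Finset

theorem key_step_theorem_A
    (n N : ℕ) (hn : 3 ≤ n) (hN : n ≤ N)
    (lam : ℕ → ℝ)
    (hmono : ∀ i j, i ≤ j → j < N → lam i ≤ lam j)
    (hknn : 0 ≤ ∑ i ∈ range ⌊(n * (n + 2) : ℝ) / (2 * (n + 1))⌋₊, lam i +
        ((n * (n + 2) : ℝ) / (2 * (n + 1)) - ⌊(n * (n + 2) : ℝ) / (2 * (n + 1))⌋₊) *
          lam ⌊(n * (n + 2) : ℝ) / (2 * (n + 1))⌋₊)
    (ω : ℕ → ℝ)
    (hω0 : ∀ i < N, 0 ≤ ω i)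
    (hωΩ : ∀ i < N, ω i ≤ 2 * (n + 1) / (n + 2))
    (hS : ∑ i ∈ range N, ω i = n) :
    0 ≤ ∑ i ∈ range N, ω i * lam i := by
  set k : ℝ := (n * (n + 2) : ℝ) / (2 * (n + 1)) with hk
  set Ω : ℝ := 2 * (n + 1) / (n + 2) with hΩ
  set m : ℕ := ⌊k⌋₊ with hm
  have hn1 : (0:ℝ) < n + 1 := by positivity
  have hn2 : (0:ℝ) < (n:ℝ) + 2 := by positivity
  have hΩpos : 0 < Ω := by rw [hΩ]; positivity
  have hk0 : 0 ≤ k := by rw [hk]; positivity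
  have hΩk : Ω * k = n := by rw [hΩ, hk]; field_simp
  have hkn : k < n := by
    have hn0 : (0:ℝ) < n := by exact_mod_cast Nat.lt_of_lt_of_le (by norm_num) hn
    rw [hk, div_lt_iff₀ (by positivity)]
    nlinarith
  have hmfl : (m : ℝ) ≤ k := Nat.floor_le hk0
  have hmN : m < N := by
    have : (m : ℝ) < n := lt_of_le_of_lt hmfl hkn
    have : m < n := by exact_mod_cast this
    omega
  set θ : ℝ := k - m with hθ
  have hθ0 : 0 ≤ θ := by simp [hθ]; linarith
  set w : ℕ → ℝ := fun i => if i < m then Ω else if i = m then θ * Ω else 0 with hw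
  -- prefix sums of w
  have hwsum_le : ∀ j, j ≤ m → ∑ i ∈ range j, w i = j * Ω := by
    intro j hj
    rw [Finset.sum_congr rfl (fun i hi => ?_), Finset.sum_const, card_range, nsmul_eq_mul]
    simp only [hw]
    rw [if_pos (lt_of_lt_of_le (mem_range.mp hi) hj)]
  have hwm : ∑ i ∈ range (m+1), w i = (n : ℝ) := by
    rw [Finset.sum_range_succ, hwsum_le m le_rfl]
    simp only [hw]
    rw [if_neg (lt_irrefl m), if_pos trivial]
    have : (m : ℝ) * Ω + θ * Ω = Ω * k := by rw [hθ]; ring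
    rw [this, hΩk]
  have hwsum_gt : ∀ j, m < j → ∑ i ∈ range j, w i = (n : ℝ) := by
    intro j hj
    rw [← hwm, Finset.sum_subset (Finset.range_subset_range.mpr hj)]
    intro x _ hx
    simp only [mem_range, not_lt] at hx
    simp only [hw]
    rw [if_neg (by omega), if_neg (by omega)]
  -- prefix sums of d := ω - w are ≤ 0
  have hD : ∀ j, j ≤ N → ∑ i ∈ range j, (ω i - w i) ≤ 0 := by
    intro j hj
    rw [Finset.sum_sub_distrib, sub_nonpos]
    rcases le_or_gt j m with h | h
    · rw [hwsum_le j h]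
      calc ∑ i ∈ range j, ω i ≤ ∑ i ∈ range j, Ω := by
            apply Finset.sum_le_sum
            intro i hi
            exact hωΩ i (lt_of_lt_of_le (lt_of_lt_of_le (mem_range.mp hi) (le_trans h hmN.le)) le_rfl)
        _ = j * Ω := by rw [Finset.sum_const, card_range, nsmul_eq_mul]
    · rw [hwsum_gt j h, ← hS]
      apply Finset.sum_le_sum_of_subset_of_nonneg (Finset.range_subset_range.mpr hj)
      intro i hi _
      exact hω0 i (mem_range.mp hi)
  have hDN : ∑ i ∈ range N, (ω i - w i) = 0 := by
    rw [Finset.sum_sub_distrib, hS, hwsum_gt N (lt_of_lt_of_le hmN le_rfl), sub_self]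
  -- Abel summation
  have habel : 0 ≤ ∑ i ∈ range N, (ω i - w i) * lam i := by
    have h := Finset.sum_range_by_parts (fun i => lam i) (fun i => ω i - w i) N
    simp only [smul_eq_mul] at h
    have hrw : ∑ i ∈ range N, (ω i - w i) * lam i
        = ∑ i ∈ range N, lam i * (ω i - w i) := by
      apply Finset.sum_congr rfl; intro i _; ring
    rw [hrw, h, hDN, mul_zero, zero_sub, neg_nonneg]
    apply Finset.sum_nonpos
    intro i hi
    have hi' := mem_range.mp hi
    apply mul_nonpos_of_nonneg_of_nonpos
    · have := hmono i (i+1) (Nat.le_succ i) (by omega)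
      linarith
    · exact hD (i+1) (by omega)
  -- value of the w-weighted sum
  have hwlam : ∑ i ∈ range N, w i * lam i
      = Ω * (∑ i ∈ range m, lam i + θ * lam m) := by
    have hsub : ∑ i ∈ range N, w i * lam i = ∑ i ∈ range (m+1), w i * lam i := by
      rw [Finset.sum_subset (Finset.range_subset_range.mpr hmN)]
      intro x _ hx
      simp only [mem_range, not_lt] at hx
      simp only [hw]
      rw [if_neg (by omega), if_neg (by omega), zero_mul]
    rw [hsub, Finset.sum_range_succ]
    have h1 : ∑ i ∈ range m, w i * lam i = ∑ i ∈ range m, Ω * lam i := by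
      apply Finset.sum_congr rfl
      intro i hi
      simp only [hw]
      rw [if_pos (mem_range.mp hi)]
    rw [h1, ← Finset.mul_sum]
    simp only [hw]
    rw [if_neg (lt_irrefl m), if_pos trivial]
    ring
  have hwnn : 0 ≤ ∑ i ∈ range N, w i * lam i := by
    rw [hwlam]
    exact mul_nonneg hΩpos.le hknn
  have : ∑ i ∈ range N, ω i * lam i
      = ∑ i ∈ range N, (ω i - w i) * lam i + ∑ i ∈ range N, w i * lam i := by
    rw [← Finset.sum_add_distrib]
    apply Finset.sum_congr rfl; intro i _; ring
  rw [this]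
  linarith
end
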